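/- arXiv:1706.09685 — 4 statements merged into one kernel-verified Lean document; each statement's English description precedes it below -/
import Mathlib

section
/- For every natural number n there exists a sequence of length n over an alphabet of three symbols that is non-repetitive, i.e., there is a function x : Fin n → Fin 3 such that no block of x is a repetition. -/
def tm (n : ℕ) : Bool :=
  if h : n = 0 then false
  else if n % 2 = 0 then tm (n / 2) else !tm (n / 2)
decreasing_by all_goals exact Nat.div_lt_self (Nat.pos_of_ne_zero h) one_lt_two

lemma tm_even (m : ℕ) : tm (2 * m) = tm m := by
  rcases Nat.eq_zero_or_pos m with h | h
  · subst h; rfl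
  · rw [tm]
    have h1 : ¬ (2 * m = 0) := by omega
    have h2 : (2 * m) % 2 = 0 := by omega
    have h3 : (2 * m) / 2 = m := by omega
    simp [h1, h2, h3]

lemma tm_odd (m : ℕ) : tm (2 * m + 1) = !tm m := by
  rw [tm]
  have h1 : ¬ (2 * m + 1 = 0) := by omega
  have h2 : ¬ ((2 * m + 1) % 2 = 0) := by omega
  have h3 : (2 * m + 1) / 2 = m := by omega
  simp [h1, h2, h3]

lemma tm_ne (m : ℕ) : tm (2 * m) ≠ tm (2 * m + 1) := by
  rw [tm_even, tm_odd]; cases tm m <;> simp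

lemma tm_overlap_free : ∀ p, 1 ≤ p → ∀ i, ¬ (∀ k, k ≤ p → tm (i + k) = tm (i + p + k)) := by
  intro p
  induction p using Nat.strong_induction_on with
  | _ p IH =>
    intro hp i H
    rcases Nat.even_or_odd p with ⟨q, hq⟩ | ⟨q, hq⟩
    · -- p = 2q even, reduce to period q
      have hq1 : 1 ≤ q := by omega
      rcases Nat.even_or_odd i with ⟨a, ha⟩ | ⟨a, ha⟩
      · refine IH q (by omega) hq1 a ?_
        intro j hj
        have := H (2 * j) (by omega)
        have e1 : i + 2 * j = 2 * (a + j) := by omega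
        have e2 : i + p + 2 * j = 2 * (a + q + j) := by omega
        rw [e1, e2, tm_even, tm_even] at this
        exact this
      · refine IH q (by omega) hq1 a ?_
        intro j hj
        have := H (2 * j) (by omega)
        have e1 : i + 2 * j = 2 * (a + j) + 1 := by omega
        have e2 : i + p + 2 * j = 2 * (a + q + j) + 1 := by omega
        rw [e1, e2, tm_odd, tm_odd] at this
        simpa using this
    · -- p odd: tm alternates on [i, i+p], contradiction with tm i = tm (i+p)
      have alt : ∀ k, k + 1 ≤ p → tm (i + k) ≠ tm (i + k + 1) := by
        intro k hk
        rcases Nat.even_or_odd (i + k) with ⟨m, hm⟩ | ⟨m, hm⟩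
        · have e1 : i + k = 2 * m := by omega
          have e2 : i + k + 1 = 2 * m + 1 := by omega
          rw [e2, e1]; exact tm_ne m
        · -- i + k odd, so i + k + p even
          have h1 := H k (by omega)
          have h2 := H (k + 1) hk
          have e1 : i + p + k = 2 * (m + q + 1) := by omega
          have e2 : i + p + (k + 1) = 2 * (m + q + 1) + 1 := by omega
          rw [e1] at h1
          rw [e2] at h2
          rw [h1, show i + k + 1 = i + (k+1) by omega, h2]
          exact tm_ne _
      have alt2 : ∀ k, k ≤ p → tm (i + k) = (if k % 2 = 0 then tm i else !tm i) := by
        intro k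
        induction k with
        | zero => simp
        | succ k ih =>
          intro hk
          have h1 := ih (by omega)
          have h2 := alt k hk
          have h3 : tm (i + (k + 1)) = !tm (i + k) := by
            rw [show i + (k + 1) = i + k + 1 by omega]
            cases hb : tm (i + k) <;> cases hc : tm (i + k + 1) <;> simp_all
          rw [h3, h1]
          rcases Nat.mod_two_eq_zero_or_one k with h | h
          · have h' : (k + 1) % 2 = 1 := by omega
            simp [h, h']
          · have h' : (k + 1) % 2 = 0 := by omega
            simp [h, h']
      have h0 := H 0 (by omega)
      have hpp := alt2 p (le_refl p)
      have hm : p % 2 = 1 := by omega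
      simp only [Nat.add_zero] at h0
      rw [← h0] at hpp
      simp [hm] at hpp


lemma tm_no_three (s : ℕ) : ¬ (tm s = tm (s + 1) ∧ tm (s + 1) = tm (s + 2)) := by
  rintro ⟨h1, h2⟩
  rcases Nat.even_or_odd s with ⟨m, hm⟩ | ⟨m, hm⟩
  · exact tm_ne m (by rw [show 2 * m + 1 = s + 1 by omega, show 2 * m = s by omega]; exact h1)
  · exact tm_ne (m + 1)
      (by rw [show 2 * (m+1) + 1 = s + 2 by omega, show 2 * (m+1) = s + 1 by omega]; exact h2)

/-- Ternary squarefree word: letter records the transition of Thue–Morse. -/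
def w (n : ℕ) : Fin 3 :=
  if tm n = tm (n + 1) then 0 else if tm n = false then 1 else 2

lemma w_key (m n : ℕ) (hw : w m = w n) :
    (tm m = tm n ↔ tm (m + 1) = tm (n + 1)) ∧ (w m ≠ 0 → tm m = tm n) := by
  unfold w at hw
  cases h1 : tm m <;> cases h2 : tm (m + 1) <;> cases h3 : tm n <;> cases h4 : tm (n + 1) <;>
    simp [h1, h2, h3, h4] at hw ⊢ <;> simp [w, h1, h2, h3, h4]

lemma w_zero (n : ℕ) (h : w n = 0) : tm n = tm (n + 1) := by
  unfold w at h
  by_contra hc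
  cases h1 : tm n <;> simp [h1] at hc <;> simp [h1, hc] at h

/-- A sequence `x` of length `n` is non-repetitive if no block of it is a repetition:
there is no starting index `i` and half-length `l ≥ 1` with `i + 2*l ≤ n` such that
`x (i+k) = x (i+l+k)` for all `k < l`. -/
def NonRepetitive {α : Type*} {n : ℕ} (x : Fin n → α) : Prop :=
  ∀ (i l : ℕ) (h : i + 2 * l ≤ n), 1 ≤ l →
    ¬ ∀ k : ℕ, (hk : k < l) →
      x ⟨i + k, by omega⟩ = x ⟨i + l + k, by omega⟩

/-- For every natural number `n` there exists a non-repetitive sequence of length `n`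
over an alphabet of three symbols. -/
theorem exists_nonrepetitive_ternary_sequence (n : ℕ) :
    ∃ x : Fin n → Fin 3, NonRepetitive x := by
  refine ⟨fun j => w j.val, ?_⟩
  intro i l h hl H
  have H' : ∀ k, k < l → w (i + k) = w (i + l + k) := fun k hk => H k hk
  by_cases hall : ∀ k, k < l → w (i + k) = 0
  · have const : ∀ j, j < 2 * l → tm (i + j) = tm (i + j + 1) := by
      intro j hj
      rcases lt_or_ge j l with hjl | hjl
      · exact w_zero _ (hall j hjl)
      · have hz := hall (j - l) (by omega)
        have hw := H' (j - l) (by omega)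
        rw [show i + l + (j - l) = i + j by omega] at hw
        exact w_zero _ (hw ▸ hz)
    exact tm_no_three i ⟨const 0 (by omega), by
      have := const 1 (by omega)
      rw [show i + 1 + 1 = i + 2 by omega] at this
      rw [show i + 1 = i + 0 + 1 by omega] at this ⊢
      exact this⟩
  · push_neg at hall
    obtain ⟨k0, hk0, hk0ne⟩ := hall
    have base : tm (i + k0) = tm (i + l + k0) := (w_key _ _ (H' k0 hk0)).2 hk0ne
    have chain : ∀ k, k ≤ l → (tm (i + k) = tm (i + l + k) ↔ tm i = tm (i + l)) := by
      intro k
      induction k with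
      | zero => simp
      | succ k ih =>
        intro hk
        have step := (w_key _ _ (H' k (by omega))).1
        rw [show i + k + 1 = i + (k + 1) by omega,
          show i + l + k + 1 = i + l + (k + 1) by omega] at step
        exact step.symm.trans (ih (by omega))
    have h0 : tm i = tm (i + l) := (chain k0 (le_of_lt hk0)).mp base
    exact tm_overlap_free l hl i (fun k hk => (chain k hk).mpr h0)
end

section
/- Every simple path is non-repetitively (32m³+1 : m)-choosable: for every m ≥ 1, every n, and every assignment L of a set of at least 32m³+1 colors to each position i ∈ {1,…,n}, there exists an assignment M with M(i) ⊆ L(i) and |M(i)| ≥ m for each i, such that every coloring c with c(i) ∈ M(i) for all i yields a non-repetitive sequence (c(1),…,c(n)). -/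
open Finset Fintype

section NonRepetitiveChoices

open scoped Classical

variable {α : Type*}

section ListAssignments

variable {n : ℕ}

def IsMeetingBlock (M : Fin n → Finset α) (i l : ℕ) : Prop :=
  ∃ _ : i + 2 * l ≤ n, ∀ k (_ : k < l), ¬Disjoint (M ⟨i + k, by omega⟩) (M ⟨i + l + k, by omega⟩)

/-- A colouring from `M` with a repetition on `i, …, i + 2l - 1` exists exactly when that block is a
meeting block, so this is the paper's notion of a non-repetitive list assignment. -/
def NonRepetitiveLists (M : Fin n → Finset α) : Prop :=
  ∀ i l, 1 ≤ l → ¬IsMeetingBlock M i l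

theorem NonRepetitiveLists.nonRepetitive {M : Fin n → Finset α} (hM : NonRepetitiveLists M)
    {c : Fin n → α} (hc : ∀ i, c i ∈ M i) : NonRepetitive c := by
  intro i l h hl hrep
  refine hM i l hl ⟨h, fun k hk ↦ not_disjoint_iff.2 ⟨c ⟨i + k, by omega⟩, hc _, ?_⟩⟩
  rw [hrep k hk]
  exact hc _

theorem NonRepetitiveLists.comp_castLE {M : Fin n → Finset α} (hM : NonRepetitiveLists M)
    {n' : ℕ} (h : n' ≤ n) : NonRepetitiveLists (M ∘ Fin.castLE h) :=
  fun i l hl ⟨_, hmeet⟩ ↦ hM i l hl ⟨by omega, hmeet⟩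

theorem nonRepetitiveLists_fin_zero (M : Fin 0 → Finset α) : NonRepetitiveLists M :=
  fun _ _ _ ⟨_, _⟩ ↦ by omega

end ListAssignments

theorem mul_le_two_mul_succ_of_le_add_sum {g : ℕ → ℝ} {C D : ℝ} (hg : ∀ j, 0 ≤ g j)
    (hD : 0 ≤ D) (hCD : 4 * D ≤ C)
    (hrec : ∀ j, C * g j ≤ g (j + 1) + ∑ l ∈ range (j + 1), D ^ (l + 1) * g (j - l)) (j : ℕ) :
    C * g j ≤ 2 * g (j + 1) := by
  induction j using Nat.strong_induction_on with
  | _ j ih =>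
  have hC : 0 ≤ C := by linarith
  have chain : ∀ l ≤ j, C ^ l * g (j - l) ≤ 2 ^ l * g j := by
    intro l hl
    induction l with
    | zero => simp
    | succ l ihl =>
      have step := ih (j - (l + 1)) (by omega)
      rw [show j - (l + 1) + 1 = j - l by omega] at step
      calc C ^ (l + 1) * g (j - (l + 1)) = C ^ l * (C * g (j - (l + 1))) := by ring
        _ ≤ C ^ l * (2 * g (j - l)) := by gcongr
        _ = 2 * (C ^ l * g (j - l)) := by ring
        _ ≤ 2 * (2 ^ l * g j) := by linarith [ihl (by omega)]
        _ = 2 ^ (l + 1) * g j := by ring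
  have term : ∀ l ∈ range (j + 1), D ^ (l + 1) * g (j - l) ≤ C * g j / 4 * (1 / 2) ^ l := by
    intro l hl
    have hl : l ≤ j := Nat.lt_succ_iff.mp (mem_range.mp hl)
    calc D ^ (l + 1) * g (j - l) ≤ (C / 4) ^ (l + 1) * g (j - l) :=
          mul_le_mul_of_nonneg_right (pow_le_pow_left₀ hD (by linarith) _) (hg _)
      _ = C / 4 * (C ^ l * g (j - l)) / 4 ^ l := by rw [div_pow, pow_succ]; ring
      _ ≤ C / 4 * (2 ^ l * g j) / 4 ^ l := by gcongr C / 4 * ?_ / _; exact chain l hl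
      _ = C * g j / 4 * (1 / 2) ^ l := by
          rw [show (4 : ℝ) ^ l = 2 ^ l * 2 ^ l by rw [← mul_pow]; norm_num, one_div_pow]
          field_simp
  have tail : ∑ l ∈ range (j + 1), D ^ (l + 1) * g (j - l) ≤ C * g j / 2 :=
    calc ∑ l ∈ range (j + 1), D ^ (l + 1) * g (j - l)
        ≤ ∑ l ∈ range (j + 1), C * g j / 4 * (1 / 2) ^ l := sum_le_sum term
      _ = C * g j / 4 * ∑ l ∈ range (j + 1), (1 / 2 : ℝ) ^ l := by rw [mul_sum]
      _ ≤ C * g j / 4 * 2 := by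
          have := hg j
          gcongr
          exact sum_geometric_two_le _
      _ = C * g j / 2 := by ring
  linarith [hrec j]

section Counting

variable (F : ℕ → Finset (Finset α))

noncomputable def nonRepChoices (j : ℕ) : Finset (Fin j → Finset α) :=
  {M ∈ piFinset fun i : Fin j ↦ F i | NonRepetitiveLists M}

noncomputable def meetingSuffixChoices (n l : ℕ) : Finset (Fin n → Finset α) :=
  {M ∈ piFinset fun i : Fin n ↦ F i |
    NonRepetitiveLists (M ∘ Fin.castLE (n.sub_le l)) ∧ ∃ i, i + 2 * l = n ∧ IsMeetingBlock M i l}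

theorem card_filter_nonRepetitiveLists_init (j : ℕ) :
    #{M ∈ piFinset (fun i : Fin (j + 1) ↦ F i) | NonRepetitiveLists (Fin.init M)} =
      #(F j) * #(nonRepChoices F j) :=
  card_snocEquiv_filter_piFinset (fun i : Fin (j + 1) ↦ F i) NonRepetitiveLists

theorem filter_nonRepetitiveLists_init_subset (j : ℕ) :
    {M ∈ piFinset (fun i : Fin (j + 1) ↦ F i) | NonRepetitiveLists (Fin.init M)} ⊆
      nonRepChoices F (j + 1) ∪
        (range (j + 1)).biUnion fun l ↦ meetingSuffixChoices F (j + 1) (l + 1) := by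
  intro M hM
  obtain ⟨hMF, hinit⟩ := mem_filter.1 hM
  by_cases hMrep : NonRepetitiveLists M
  · exact mem_union_left _ (mem_filter.2 ⟨hMF, hMrep⟩)
  obtain ⟨i, l, hl, hblock⟩ : ∃ i l, 1 ≤ l ∧ IsMeetingBlock M i l := by
    simpa [NonRepetitiveLists] using hMrep
  -- `Fin.init M` has no meeting block, so this one ends at the last position
  have hend : i + 2 * l = j + 1 := by
    obtain ⟨h, hmeet⟩ := hblock
    by_contra hne
    exact hinit i l hl ⟨by omega, hmeet⟩
  refine mem_union_right _ (mem_biUnion.2 ⟨l - 1, mem_range.2 (by omega), ?_⟩)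
  rw [Nat.sub_add_cancel hl]
  exact mem_filter.2 ⟨hMF, hinit.comp_castLE (show j + 1 - l ≤ j by omega), i, hend, hblock⟩

variable {F} {D : ℕ} (hD : ∀ i i', ∀ B ∈ F i, #{A ∈ F i' | ¬Disjoint B A} ≤ D)
include hD

theorem card_meetingSuffixChoices_le (n l : ℕ) :
    #(meetingSuffixChoices F n l) ≤ D ^ l * #(nonRepChoices F (n - l)) := by
  by_cases hn : ∃ i, i + 2 * l = n
  swap
  · rw [show meetingSuffixChoices F n l = ∅ from
      filter_eq_empty_iff.2 fun M _ ⟨_, i, hi, _⟩ ↦ hn ⟨i, hi⟩]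
    simp
  obtain ⟨i, rfl⟩ := hn
  refine card_le_mul_card_image_of_maps_to (f := fun M ↦ M ∘ Fin.castLE (Nat.sub_le _ l))
    (fun M hM ↦ ?_) _ fun P hP ↦ ?_
  · obtain ⟨hMF, hpre, -⟩ := mem_filter.1 hM
    exact mem_filter.2 ⟨mem_piFinset.2 fun x ↦ mem_piFinset.1 hMF _, hpre⟩
  obtain ⟨hPF, -⟩ := mem_filter.1 hP
  calc #{M ∈ meetingSuffixChoices F (i + 2 * l) l | M ∘ Fin.castLE (Nat.sub_le _ l) = P}
      ≤ #(piFinset fun t : Fin l ↦ {A ∈ F (i + l + t) | ¬Disjoint (P ⟨i + t, by omega⟩) A}) := by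
        refine card_le_card_of_injOn (fun M t ↦ M ⟨i + l + t, by omega⟩) (fun M hM ↦ ?_) ?_
        · obtain ⟨hMs, rfl⟩ := mem_filter.1 hM
          obtain ⟨hMF, -, i', hi', _, hmeet⟩ := mem_filter.1 hMs
          obtain rfl : i' = i := by omega
          exact mem_piFinset.2 fun t ↦ mem_filter.2 ⟨mem_piFinset.1 hMF _, hmeet t t.isLt⟩
        · intro M hM M' hM' hsuffix
          have hprefix := (mem_filter.1 hM).2.trans (mem_filter.1 hM').2.symm
          funext x
          by_cases hx : x < i + 2 * l - l
          · exact congrFun hprefix ⟨x, hx⟩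
          · rw [show x = ⟨i + l + (x - (i + l)), by omega⟩ from Fin.ext (by simp only; omega)]
            exact congrFun hsuffix ⟨x - (i + l), by omega⟩
    _ ≤ D ^ l := by
        rw [card_piFinset]
        refine (prod_le_pow_card _ _ D fun t _ ↦ ?_).trans_eq (by simp)
        exact hD (i + t) _ _ (mem_piFinset.1 hPF ⟨i + t, by omega⟩)

variable {C : ℕ} (hC : ∀ i, C ≤ #(F i))
include hC

theorem card_mul_card_nonRepChoices_le (j : ℕ) :
    C * #(nonRepChoices F j) ≤
      #(nonRepChoices F (j + 1)) + ∑ l ∈ range (j + 1), D ^ (l + 1) * #(nonRepChoices F (j - l)) :=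
  calc C * #(nonRepChoices F j)
      ≤ #(F j) * #(nonRepChoices F j) := Nat.mul_le_mul_right _ (hC j)
    _ = #{M ∈ piFinset (fun i : Fin (j + 1) ↦ F i) | NonRepetitiveLists (Fin.init M)} :=
        (card_filter_nonRepetitiveLists_init F j).symm
    _ ≤ #(nonRepChoices F (j + 1)) +
          #((range (j + 1)).biUnion fun l ↦ meetingSuffixChoices F (j + 1) (l + 1)) :=
        (card_le_card (filter_nonRepetitiveLists_init_subset F j)).trans (card_union_le _ _)
    _ ≤ _ := by
        gcongr
        refine card_biUnion_le.trans (sum_le_sum fun l _ ↦ ?_)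
        have := card_meetingSuffixChoices_le hD (j + 1) (l + 1)
        rwa [Nat.add_sub_add_right] at this

theorem nonRepChoices_nonempty (hCpos : 0 < C) (hCD : 4 * D ≤ C) (j : ℕ) :
    (nonRepChoices F j).Nonempty := by
  have hgrowth (j : ℕ) : C * #(nonRepChoices F j) ≤ 2 * #(nonRepChoices F (j + 1)) := by
    exact_mod_cast mul_le_two_mul_succ_of_le_add_sum (g := fun j ↦ (#(nonRepChoices F j) : ℝ))
      (C := C) (fun _ ↦ Nat.cast_nonneg _) (Nat.cast_nonneg D) (by exact_mod_cast hCD)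
      (fun j ↦ by exact_mod_cast card_mul_card_nonRepChoices_le hD hC j) j
  induction j with
  | zero => exact ⟨finZeroElim, mem_filter.2 ⟨mem_piFinset.2 finZeroElim,
      nonRepetitiveLists_fin_zero _⟩⟩
  | succ j ih =>
    rw [← Finset.card_pos] at ih ⊢
    linarith [hgrowth j, Nat.mul_pos hCpos ih]

end Counting

theorem card_filter_mem_powersetCard_le (S : Finset α) (x : α) (m : ℕ) :
    #{A ∈ S.powersetCard m | x ∈ A} ≤ (#S - 1).choose (m - 1) := by
  by_cases h : x ∈ S ∧ 1 ≤ m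
  · have := card_filter_powersetCard_subset {x} S m (by simpa using h.1) (by simpa using h.2)
    simpa using this.le
  · rw [filter_eq_empty_iff.2]
    · exact Nat.zero_le _
    intro A hA hxA
    rw [mem_powersetCard] at hA
    exact h ⟨hA.1 hxA, hA.2 ▸ card_pos.2 ⟨x, hxA⟩⟩

theorem card_filter_not_disjoint_powersetCard_le (B S : Finset α) (m : ℕ) :
    #{A ∈ S.powersetCard m | ¬Disjoint B A} ≤ #B * (#S - 1).choose (m - 1) := by
  refine (card_le_card fun A hA ↦ ?_).trans
    (card_biUnion_le_card_mul B (fun x ↦ {A ∈ S.powersetCard m | x ∈ A}) _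
      fun x _ ↦ card_filter_mem_powersetCard_le S x m)
  obtain ⟨hA, hBA⟩ := mem_filter.1 hA
  obtain ⟨x, hxB, hxA⟩ := not_disjoint_iff.1 hBA
  exact mem_biUnion.2 ⟨x, hxB, mem_filter.2 ⟨hA, hxA⟩⟩

theorem four_mul_mul_choose_le {m N : ℕ} (h : 4 * m ^ 2 ≤ N) :
    4 * (m * (N - 1).choose (m - 1)) ≤ N.choose m := by
  obtain _ | m := m
  · simp
  have hN : 0 < N := by
    have : 0 < (m + 1) ^ 2 := by positivity
    omega
  obtain ⟨N, rfl⟩ : ∃ N', N = N' + 1 := ⟨N - 1, by omega⟩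
  simp only [Nat.add_sub_cancel]
  refine Nat.le_of_mul_le_mul_left ?_ N.succ_pos
  calc (N + 1) * (4 * ((m + 1) * N.choose m)) = 4 * (m + 1) * ((N + 1) * N.choose m) := by ring
    _ = 4 * (m + 1) ^ 2 * (N + 1).choose (m + 1) := by rw [Nat.add_one_mul_choose_eq]; ring
    _ ≤ (N + 1) * (N + 1).choose (m + 1) := by gcongr

theorem exists_nonRepetitiveLists_powersetCard {S : ℕ → Finset α} {m N : ℕ}
    (hS : ∀ i, #(S i) = N) (hmN : 4 * m ^ 2 ≤ N) (j : ℕ) :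
    ∃ M : Fin j → Finset α, (∀ i : Fin j, M i ∈ (S i).powersetCard m) ∧ NonRepetitiveLists M := by
  have hC (i : ℕ) : N.choose m ≤ #((S i).powersetCard m) := by simp [hS]
  have hD (i i' : ℕ) : ∀ B ∈ (S i).powersetCard m,
      #{A ∈ (S i').powersetCard m | ¬Disjoint B A} ≤ m * (N - 1).choose (m - 1) := by
    intro B hB
    simpa [(mem_powersetCard.1 hB).2, hS] using card_filter_not_disjoint_powersetCard_le B (S i') m
  have hmN' : m ≤ N := by nlinarith
  obtain ⟨M, hM⟩ := nonRepChoices_nonempty hD hC (Nat.choose_pos hmN')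
    (four_mul_mul_choose_le hmN) j
  obtain ⟨hMS, hM⟩ := mem_filter.1 hM
  exact ⟨M, mem_piFinset.1 hMS, hM⟩

end NonRepetitiveChoices

theorem path_nonrepetitively_choosable_general {α : Type*} (m n : ℕ)
    (L : Fin n → Finset α) (hL : ∀ i, 32 * m ^ 3 + 1 ≤ (L i).card) :
    ∃ M : Fin n → Finset α,
      (∀ i, M i ⊆ L i) ∧
      (∀ i, m ≤ (M i).card) ∧
      (∀ c : Fin n → α, (∀ i, c i ∈ M i) → NonRepetitive c) := by
  obtain rfl | hn := Nat.eq_zero_or_pos n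
  · exact ⟨L, fun _ ↦ subset_rfl, finZeroElim, fun _ _ _ _ h hl ↦ by omega⟩
  -- extend `L` to all of `ℕ` by repeating its last list, each cut down to `32 m³ + 1` colours
  have hS (i : ℕ) : ∃ S ⊆ L ⟨min i (n - 1), by omega⟩, #S = 32 * m ^ 3 + 1 :=
    exists_subset_card_eq (hL _)
  choose S hSL hS using hS
  have hmN : 4 * m ^ 2 ≤ 32 * m ^ 3 + 1 := by
    obtain _ | m := m
    · simp
    · nlinarith [Nat.pow_le_pow_right m.succ_pos (show 2 ≤ 3 by norm_num)]
  obtain ⟨M, hMS, hM⟩ := exists_nonRepetitiveLists_powersetCard hS hmN n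
  have hML (i : Fin n) : M i ⊆ L i ∧ #(M i) = m := by
    obtain ⟨hsub, hcard⟩ := mem_powersetCard.1 (hMS i)
    refine ⟨hsub.trans ((hSL i).trans_eq (congrArg L (Fin.ext ?_))), hcard⟩
    simp only
    have := i.isLt
    omega
  exact ⟨M, fun i ↦ (hML i).1, fun i ↦ (hML i).2.ge, fun c hc ↦ hM.nonRepetitive hc⟩

/-- Every simple path is non-repetitively `(32m³+1 : m)`-choosable: for every `m ≥ 1`,
every `n`, and every list assignment `L` with at least `32m³+1` colors at each position,
there exists a list assignment `M` with `M i ⊆ L i` and `|M i| ≥ m` for each position,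
such that every coloring `c` with `c i ∈ M i` for all `i` is non-repetitive. -/
theorem path_nonrepetitively_choosable {α : Type*} (m n : ℕ) (hm : 1 ≤ m)
    (L : Fin n → Finset α) (hL : ∀ i, 32 * m ^ 3 + 1 ≤ (L i).card) :
    ∃ M : Fin n → Finset α,
      (∀ i, M i ⊆ L i) ∧
      (∀ i, m ≤ (M i).card) ∧
      (∀ c : Fin n → α, (∀ i, c i ∈ M i) → NonRepetitive c) :=
  path_nonrepetitively_choosable_general m n L hL
end

section
/- Walk Filtering Lemma (laminar form): Set f₃(m)=32m³+1, f₄(m)=32m³+m+1, f₅(m)=f₃(f₄(m))+m+f₄(m), and f₆(m)=f₅(f₅(m)). Let W = (w_1,…,w_n) be a walk on a vertex set V whose repeated occurrences have laminar structure: there are no positions i < a < j < b with w_i = w_j, w_a = w_b, and w_i ≠ w_a. Let L : V → (finite sets of colors) be a proper list assignment of W (i.e., L(w_i) ∩ L(w_{i+1}) = ∅ for all 1 ≤ i < n) with |L(v)| ≥ f₆(m) for every vertex v occurring in W. Then there exists M with M(v) ⊆ L(v) and |M(v)| ≥ m for every vertex v occurring in W, such that for every simple W-block P = (w_i,…,w_j)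 (a block of W on which the vertices w_i,…,w_j are pairwise distinct) and every coloring c with c(v) ∈ M(v) for all v, the sequence (c(w_i),…,c(w_j)) is non-repetitive. -/
/-!
Each filtering step picks, for every vertex `v` of the walk, an `m`-subset `M v` of an
`F`-subset of its list, where `4 m² ≤ F`. Choosing these sets along the walk, at first
occurrences, one can break every square `(a, l)` whose second half consists of first
occurrences, i.e. make some `M (w (a + k))` and `M (w (a + l + k))` disjoint. This is
Rosenfeld's counting argument. Let `A = C(F, m)`, `B = m C(F - 1, m - 1) ≤ A / 4`, and let
`S p` be the set of admissible partial choices before position `p`. The extensions at a fresh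
position `p` that complete an unbroken square of length `l` number at most
`B^l |S (p + 1 - l)| ≤ B 2^(1 - l) |S p|`, by induction on `p`, so at least `A |S p| / 2`
extensions are admissible.

On the reversed walk, the same choice breaks the squares whose first half consists of last
occurrences. In a simple block of a laminar walk, if a vertex of the second half of a square
occurs before the block, then no vertex of the first half occurs after it. Hence a reversed
pass from `f₆(m) = f₅(f₅(m))` colours down to `f₅(m)`, followed by a forward pass down to
`m`, breaks every square in every simple block. A colouring from `M` cannot repeat on a broken
square.
-/

/-- `f₃(m) = 32m³ + 1`. -/
def f3 (m : ℕ) : ℕ := 32 * m ^ 3 + 1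

/-- `f₄(m) = f₃(m) + m = 32m³ + m + 1`. -/
def f4 (m : ℕ) : ℕ := f3 m + m

/-- `f₅(m) = f₃(f₄(m)) + m + f₄(m)`. -/
def f5 (m : ℕ) : ℕ := f3 (f4 m) + m + f4 m

/-- `f₆(m) = f₅(f₅(m))`. -/
def f6 (m : ℕ) : ℕ := f5 (f5 m)

namespace WalkFiltering

open Finset Function

section Counting

variable {C : Type*}

lemma card_filter_mem_powersetCard_le [DecidableEq C] (m : ℕ) (X : Finset C) (x : C) :
    #{s ∈ powersetCard m X | x ∈ s} ≤ (#X - 1).choose (m - 1) := by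
  by_cases h : x ∈ X ∧ 1 ≤ m
  · have := card_filter_powersetCard_subset {x} X m (singleton_subset_iff.2 h.1)
      (by simpa using h.2)
    simp only [singleton_subset_iff, card_singleton] at this
    exact this.le
  · rw [filter_false_of_mem fun s hs hxs => h ⟨(mem_powersetCard.1 hs).1 hxs, ?_⟩]
    · simp
    · rw [← (mem_powersetCard.1 hs).2]
      exact card_pos.2 ⟨x, hxs⟩

lemma card_filter_not_disjoint_powersetCard_le [DecidableEq C] (m : ℕ) (X D : Finset C) :
    #{s ∈ powersetCard m X | ¬Disjoint D s} ≤ #D * (#X - 1).choose (m - 1) := by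
  have hsub : {s ∈ powersetCard m X | ¬Disjoint D s} ⊆
      D.biUnion fun x => {s ∈ powersetCard m X | x ∈ s} := by
    intro s hs
    obtain ⟨hs, hDs⟩ := mem_filter.1 hs
    obtain ⟨x, hxD, hxs⟩ := not_disjoint_iff.1 hDs
    exact mem_biUnion.2 ⟨x, hxD, mem_filter.2 ⟨hs, hxs⟩⟩
  calc #{s ∈ powersetCard m X | ¬Disjoint D s}
      ≤ ∑ x ∈ D, #{s ∈ powersetCard m X | x ∈ s} :=
        (card_le_card hsub).trans card_biUnion_le
    _ ≤ #D * (#X - 1).choose (m - 1) := by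
      simpa using sum_le_card_nsmul D _ _ fun x _ => card_filter_mem_powersetCard_le m X x

end Counting

lemma four_mul_mul_choose_le_choose {m F : ℕ} (h : 4 * m ^ 2 ≤ F) :
    4 * (m * (F - 1).choose (m - 1)) ≤ F.choose m := by
  obtain _ | m := m
  · simp
  obtain _ | F := F
  · simp at h
  have hid := Nat.add_one_mul_choose_eq F m
  simp only [Nat.add_sub_cancel] at hid ⊢
  refine Nat.le_of_mul_le_mul_left ?_ m.succ_pos
  calc (m + 1) * (4 * ((m + 1) * F.choose m)) = 4 * (m + 1) ^ 2 * F.choose m := by ring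
    _ ≤ (F + 1) * F.choose m := Nat.mul_le_mul_right _ h
    _ = (m + 1) * (F + 1).choose (m + 1) := by rw [hid, mul_comm]

lemma pow_mul_le_pow_mul_of_forall_lt {x : ℕ → ℕ} {a b d : ℕ}
    (h : ∀ k < d, a * x k ≤ b * x (k + 1)) : a ^ d * x 0 ≤ b ^ d * x d := by
  induction d with
  | zero => simp
  | succ d ih =>
    calc a ^ (d + 1) * x 0 = a * (a ^ d * x 0) := by ring
      _ ≤ a * (b ^ d * x d) := Nat.mul_le_mul_left _ (ih fun k hk => h k (by omega))
      _ = b ^ d * (a * x d) := by ring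
      _ ≤ b ^ d * (b * x (d + 1)) := Nat.mul_le_mul_left _ (h d d.lt_succ_self)
      _ = b ^ (d + 1) * x (d + 1) := by ring

lemma sum_range_le_two_mul_of_two_pow_mul_le {y : ℕ → ℕ} {c p : ℕ}
    (h : ∀ i < p, 2 ^ i * y i ≤ c) : ∑ i ∈ range p, y i ≤ 2 * c := by
  induction p generalizing y with
  | zero => simp
  | succ p ih =>
    have htail := ih (y := fun i => 2 * y (i + 1)) fun i hi => by
      simpa [pow_succ, mul_assoc, mul_comm, mul_left_comm] using h (i + 1) (by omega)
    have hhead : y 0 ≤ c := by simpa using h 0 (by omega)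
    rw [sum_range_succ']
    rw [← mul_sum] at htail
    omega

lemma two_pow_mul_le_of_le_pow_mul {y Y X a b d : ℕ} (hy : y ≤ b ^ (d + 1) * Y)
    (hY : a ^ d * Y ≤ 2 ^ d * X) (hab : 4 * b ≤ a) : 2 ^ d * y ≤ b * X := by
  refine Nat.le_of_mul_le_mul_left ?_ (Nat.two_pow_pos d)
  calc 2 ^ d * (2 ^ d * y) = 4 ^ d * y := by rw [← mul_assoc, ← mul_pow]; norm_num
    _ ≤ 4 ^ d * (b ^ (d + 1) * Y) := Nat.mul_le_mul_left _ hy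
    _ = b * ((4 * b) ^ d * Y) := by ring
    _ ≤ b * (a ^ d * Y) :=
      Nat.mul_le_mul_left _ (Nat.mul_le_mul_right _ (Nat.pow_le_pow_left hab d))
    _ ≤ b * (2 ^ d * X) := Nat.mul_le_mul_left _ hY
    _ = 2 ^ d * (b * X) := by ring

lemma four_mul_sq_le_f5 (x : ℕ) : 4 * x ^ 2 ≤ f5 x := by
  have h : x ≤ f4 x := by unfold f4 f3; omega
  have h3 : 4 * x ^ 2 ≤ 32 * f4 x ^ 3 := by
    calc 4 * x ^ 2 ≤ 32 * x ^ 3 := by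
          rcases x.eq_zero_or_pos with rfl | hx
          · simp
          · nlinarith [Nat.mul_le_mul_left (4 * x ^ 2) (show 1 ≤ 8 * x by omega)]
      _ ≤ 32 * f4 x ^ 3 := by gcongr
  unfold f5 f3
  omega


section States

open scoped Classical

variable {V C : Type*} (w : ℕ → V)

def IsFirstOcc (p : ℕ) : Prop := ∀ q < p, w q ≠ w p

def Breaks (g : V → Finset C) (a l : ℕ) : Prop :=
  ∃ k < l, Disjoint (g (w (a + k))) (g (w (a + l + k)))

def HasFreshSecondHalf (a l : ℕ) : Prop := ∀ k < l, IsFirstOcc w (a + l + k)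

def BreaksPatternsEndingAt (p : ℕ) (g : V → Finset C) : Prop :=
  ∀ a d, a + 2 * (d + 1) = p + 1 → HasFreshSecondHalf w a (d + 1) → Breaks w g a (d + 1)

variable (m : ℕ) (K : V → Finset C)

noncomputable def goodChoices (p : ℕ) (g : V → Finset C) : Finset (Finset C) :=
  {s ∈ powersetCard m (K (w p)) | BreaksPatternsEndingAt w p (update g (w p) s)}

noncomputable def badChoices (p : ℕ) (g : V → Finset C) (d : ℕ) : Finset (Finset C) :=
  {s ∈ powersetCard m (K (w p)) | ∃ a, a + 2 * (d + 1) = p + 1 ∧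
    HasFreshSecondHalf w a (d + 1) ∧ ¬Breaks w (update g (w p) s) a (d + 1)}

/-- A state assigns to each vertex met so far the `m`-set chosen at its first occurrence, and
`∅` to all other vertices; `states p` collects the choices for the positions before `p` that
break every pattern ending before `p`. -/
noncomputable def states : ℕ → Finset (V → Finset C)
  | 0 => {fun _ => ∅}
  | p + 1 =>
    if IsFirstOcc w p then
      (states p).biUnion fun g => (goodChoices w m K p g).image (update g (w p))
    else states p

variable {w m K}

lemma update_apply_of_lt {p q : ℕ} (hp : IsFirstOcc w p) (hq : q < p) (g : V → Finset C)
    (s : Finset C) : update g (w p) s (w q) = g (w q) :=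
  update_of_ne (hp q hq) s g

lemma mem_states_succ {p : ℕ} (hp : IsFirstOcc w p) {h : V → Finset C} :
    h ∈ states w m K (p + 1) ↔
      ∃ g ∈ states w m K p, ∃ s ∈ goodChoices w m K p g, update g (w p) s = h := by
  simp only [states, if_pos hp, mem_biUnion, mem_image]

lemma states_spec {p : ℕ} {g : V → Finset C} (hg : g ∈ states w m K p) :
    (∀ q < p, g (w q) ∈ powersetCard m (K (w q))) ∧
      ∀ v, (∀ q < p, w q ≠ v) → g v = ∅ := by
  induction p generalizing g with
  | zero =>
    rw [states, mem_singleton] at hg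
    exact ⟨fun q hq => absurd hq q.not_lt_zero, fun v _ => by rw [hg]⟩
  | succ p ih =>
    by_cases hp : IsFirstOcc w p
    · obtain ⟨g₀, hg₀, s, hs, rfl⟩ := (mem_states_succ hp).1 hg
      refine ⟨fun q hq => ?_, fun v hv => ?_⟩
      · obtain hq | rfl := Nat.lt_succ_iff_lt_or_eq.1 hq
        · rw [update_apply_of_lt hp hq]
          exact (ih hg₀).1 q hq
        · rw [update_self]
          exact (mem_filter.1 hs).1
      · rw [update_of_ne (hv p p.lt_succ_self).symm]
        exact (ih hg₀).2 v fun q hq => hv q (by omega)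
    · rw [states, if_neg hp] at hg
      refine ⟨fun q hq => ?_, fun v hv => (ih hg).2 v fun q hq => hv q (by omega)⟩
      obtain hq | rfl := Nat.lt_succ_iff_lt_or_eq.1 hq
      · exact (ih hg).1 q hq
      · obtain ⟨r, hr, hrq⟩ : ∃ r < q, w r = w q := by simpa [IsFirstOcc] using hp
        rw [← hrq]
        exact (ih hg).1 r hr

lemma eq_of_update_eq {p : ℕ} (hp : IsFirstOcc w p) {g₁ g₂ : V → Finset C}
    (h₁ : g₁ ∈ states w m K p) (h₂ : g₂ ∈ states w m K p) {s₁ s₂ : Finset C}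
    (h : update g₁ (w p) s₁ = update g₂ (w p) s₂) : g₁ = g₂ ∧ s₁ = s₂ := by
  have hrestore : ∀ g ∈ states w m K p, ∀ s, update (update g (w p) s) (w p) ∅ = g := by
    intro g hg s
    rw [update_idem, update_eq_self_iff]
    exact ((states_spec hg).2 _ hp).symm
  refine ⟨?_, by simpa using congrFun h (w p)⟩
  rw [← hrestore g₁ h₁ s₁, h, hrestore g₂ h₂ s₂]

lemma card_states_succ {p : ℕ} (hp : IsFirstOcc w p) :
    #(states w m K (p + 1)) = ∑ g ∈ states w m K p, #(goodChoices w m K p g) := by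
  rw [states, if_pos hp, card_biUnion]
  · exact sum_congr rfl fun g hg =>
      card_image_of_injOn fun s₁ _ s₂ _ h => (eq_of_update_eq hp hg hg h).2
  · intro g₁ h₁ g₂ h₂ hne
    simp only [disjoint_left, mem_image]
    rintro _ ⟨s₁, -, rfl⟩ ⟨s₂, -, h⟩
    exact hne (eq_of_update_eq hp h₁ h₂ h.symm).1

lemma breaks_update_of_le {g : V → Finset C} {a l p : ℕ} (h : Breaks w g a l)
    (hp : IsFirstOcc w p) (hal : a + 2 * l ≤ p) (s : Finset C) :
    Breaks w (update g (w p) s) a l := by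
  obtain ⟨k, hk, hdisj⟩ := h
  exact ⟨k, hk, by rwa [update_apply_of_lt hp (by omega), update_apply_of_lt hp (by omega)]⟩

lemma breaks_of_mem_states {p : ℕ} {g : V → Finset C} (hg : g ∈ states w m K p) {a l : ℕ}
    (hl : 1 ≤ l) (hap : a + 2 * l ≤ p) (hfresh : HasFreshSecondHalf w a l) :
    Breaks w g a l := by
  induction p generalizing g with
  | zero => omega
  | succ p ih =>
    obtain hap | hap := Nat.lt_or_eq_of_le hap
    · by_cases hp : IsFirstOcc w p
      · obtain ⟨g₀, hg₀, s, -, rfl⟩ := (mem_states_succ hp).1 hg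
        exact breaks_update_of_le (ih hg₀ (by omega)) hp (by omega) s
      · rw [states, if_neg hp] at hg
        exact ih hg (by omega)
    · obtain ⟨d, rfl⟩ : ∃ d, l = d + 1 := ⟨l - 1, by omega⟩
      have hp : IsFirstOcc w p := by
        convert hfresh d d.lt_succ_self using 2
        omega
      obtain ⟨g, -, s, hs, rfl⟩ := (mem_states_succ hp).1 hg
      exact (mem_filter.1 hs).2 a d hap hfresh

lemma not_breaks_update {p a d : ℕ} (hp : IsFirstOcc w p) (hap : a + 2 * (d + 1) = p + 1)
    {g : V → Finset C} {s : Finset C} (h : ¬Breaks w (update g (w p) s) a (d + 1)) :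
    (∀ k < d, ¬Disjoint (g (w (a + k))) (g (w (a + (d + 1) + k)))) ∧
      ¬Disjoint (g (w (a + d))) s := by
  simp only [Breaks, not_exists, not_and] at h
  refine ⟨fun k hk => ?_, ?_⟩
  · have := h k (by omega)
    rwa [update_apply_of_lt hp (by omega), update_apply_of_lt hp (by omega)] at this
  · have := h d d.lt_succ_self
    rwa [update_apply_of_lt hp (by omega), show a + (d + 1) + d = p by omega,
      update_self] at this

lemma card_filter_states_succ_le {p r F : ℕ} (hK : #(K (w p)) = F) (hp : IsFirstOcc w p)
    (hr : r < p) (P : (V → Finset C) → Prop) [DecidablePred P]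
    (hP : ∀ g s, P (update g (w p) s) → P g) :
    #{h ∈ states w m K (p + 1) | P h ∧ ¬Disjoint (h (w r)) (h (w p))} ≤
      m * (F - 1).choose (m - 1) * #{g ∈ states w m K p | P g} := by
  have hsub : {h ∈ states w m K (p + 1) | P h ∧ ¬Disjoint (h (w r)) (h (w p))} ⊆
      {g ∈ states w m K p | P g}.biUnion fun g =>
        {s ∈ powersetCard m (K (w p)) | ¬Disjoint (g (w r)) s}.image (update g (w p)) := by
    intro h hh
    obtain ⟨hh, hPh, hdisj⟩ := mem_filter.1 hh
    obtain ⟨g, hg, s, hs, rfl⟩ := (mem_states_succ hp).1 hh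
    rw [update_apply_of_lt hp hr, update_self] at hdisj
    exact mem_biUnion.2 ⟨g, mem_filter.2 ⟨hg, hP g s hPh⟩,
      mem_image.2 ⟨s, mem_filter.2 ⟨(mem_filter.1 hs).1, hdisj⟩, rfl⟩⟩
  refine (card_le_card hsub).trans (card_biUnion_le.trans ?_)
  rw [mul_comm, ← smul_eq_mul]
  refine sum_le_card_nsmul _ _ _ fun g hg => card_image_le.trans ?_
  have hgr := (mem_powersetCard.1 ((states_spec (mem_filter.1 hg).1).1 r hr)).2
  simpa [hK, hgr] using card_filter_not_disjoint_powersetCard_le m (K (w p)) (g (w r))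

lemma card_filter_states_add_le {n F : ℕ} (hK : ∀ i < n, #(K (w i)) = F) {a q j : ℕ}
    (haq : a + j ≤ q) (hqn : q + j ≤ n) (hfresh : ∀ k < j, IsFirstOcc w (q + k)) :
    #{g ∈ states w m K (q + j) | ∀ k < j, ¬Disjoint (g (w (a + k))) (g (w (q + k)))} ≤
      (m * (F - 1).choose (m - 1)) ^ j * #(states w m K q) := by
  induction j with
  | zero => simp
  | succ j ih =>
    have hj := hfresh j j.lt_succ_self
    calc #{g ∈ states w m K (q + (j + 1)) |
            ∀ k < j + 1, ¬Disjoint (g (w (a + k))) (g (w (q + k)))}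
        = #{g ∈ states w m K (q + j + 1) |
            (∀ k < j, ¬Disjoint (g (w (a + k))) (g (w (q + k)))) ∧
            ¬Disjoint (g (w (a + j))) (g (w (q + j)))} := by
          simp only [Nat.forall_lt_succ_right, ← add_assoc]
      _ ≤ m * (F - 1).choose (m - 1) *
            #{g ∈ states w m K (q + j) | ∀ k < j, ¬Disjoint (g (w (a + k))) (g (w (q + k)))} :=
          card_filter_states_succ_le (r := a + j) (hK (q + j) (by omega)) hj (by omega)
            (fun g => ∀ k < j, ¬Disjoint (g (w (a + k))) (g (w (q + k)))) fun g s h k hk => by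
            simpa only [update_apply_of_lt hj (by omega : a + k < q + j),
              update_apply_of_lt hj (by omega : q + k < q + j)] using h k hk
      _ ≤ m * (F - 1).choose (m - 1) * ((m * (F - 1).choose (m - 1)) ^ j * #(states w m K q)) :=
          Nat.mul_le_mul_left _ (ih (by omega) (by omega) fun k hk => hfresh k (by omega))
      _ = (m * (F - 1).choose (m - 1)) ^ (j + 1) * #(states w m K q) := by ring

lemma sum_card_badChoices_le {n F : ℕ} (hK : ∀ i < n, #(K (w i)) = F) {p a d : ℕ} (hp : p < n)
    (hap : a + 2 * (d + 1) = p + 1) (hfresh : HasFreshSecondHalf w a (d + 1)) :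
    ∑ g ∈ states w m K p, #(badChoices w m K p g d) ≤
      (m * (F - 1).choose (m - 1)) ^ (d + 1) * #(states w m K (a + (d + 1))) := by
  obtain rfl : p = a + (d + 1) + d := by omega
  have hpf : IsFirstOcc w (a + (d + 1) + d) := hfresh d d.lt_succ_self
  have hbad : ∀ g, ∀ s ∈ badChoices w m K (a + (d + 1) + d) g d,
      (∀ k < d, ¬Disjoint (g (w (a + k))) (g (w (a + (d + 1) + k)))) ∧
        s ∈ {s ∈ powersetCard m (K (w (a + (d + 1) + d))) | ¬Disjoint (g (w (a + d))) s} := by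
    intro g s hs
    obtain ⟨hs, a', ha', -, hnb⟩ := mem_filter.1 hs
    obtain rfl : a' = a := by omega
    obtain ⟨hpeel, hlast⟩ := not_breaks_update hpf hap hnb
    exact ⟨hpeel, mem_filter.2 ⟨hs, hlast⟩⟩
  have hcard : ∀ g ∈ states w m K (a + (d + 1) + d),
      #(badChoices w m K (a + (d + 1) + d) g d) ≤ m * (F - 1).choose (m - 1) := by
    intro g hg
    have hgr := (mem_powersetCard.1 ((states_spec hg).1 (a + d) (by omega))).2
    refine (card_le_card fun s hs => (hbad g s hs).2).trans ?_
    simpa [hK _ hp, hgr] using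
      card_filter_not_disjoint_powersetCard_le m (K (w (a + (d + 1) + d))) (g (w (a + d)))
  rw [← sum_filter_of_ne (p := fun g => ∀ k < d,
      ¬Disjoint (g (w (a + k))) (g (w (a + (d + 1) + k)))) fun g _ hne =>
    (hbad g _ (card_ne_zero.1 hne).choose_spec).1]
  calc _ ≤ #{g ∈ states w m K (a + (d + 1) + d) |
          ∀ k < d, ¬Disjoint (g (w (a + k))) (g (w (a + (d + 1) + k)))} *
        (m * (F - 1).choose (m - 1)) :=
        sum_le_card_nsmul _ _ _ fun g hg => hcard g (mem_filter.1 hg).1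
    _ ≤ (m * (F - 1).choose (m - 1)) ^ d * #(states w m K (a + (d + 1))) *
        (m * (F - 1).choose (m - 1)) :=
        Nat.mul_le_mul_right _ (card_filter_states_add_le hK (by omega) (by omega)
          fun k hk => hfresh k (by omega))
    _ = _ := by ring

lemma two_pow_mul_sum_card_badChoices_le {n F : ℕ} (hF : 4 * m ^ 2 ≤ F)
    (hK : ∀ i < n, #(K (w i)) = F) {p : ℕ} (hp : p < n)
    (hgrowth : ∀ q < p, IsFirstOcc w q →
      F.choose m * #(states w m K q) ≤ 2 * #(states w m K (q + 1))) (d : ℕ) :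
    2 ^ d * ∑ g ∈ states w m K p, #(badChoices w m K p g d) ≤
      m * (F - 1).choose (m - 1) * #(states w m K p) := by
  by_cases h : ∃ a, a + 2 * (d + 1) = p + 1 ∧ HasFreshSecondHalf w a (d + 1)
  · obtain ⟨a, hap, hfresh⟩ := h
    have hchain : F.choose m ^ d * #(states w m K (a + (d + 1))) ≤ 2 ^ d * #(states w m K p) := by
      have := pow_mul_le_pow_mul_of_forall_lt (x := fun k => #(states w m K (a + (d + 1) + k)))
        (d := d) fun k hk => hgrowth _ (by omega) (hfresh k (by omega))
      simpa [show a + (d + 1) + d = p by omega] using this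
    exact two_pow_mul_le_of_le_pow_mul (sum_card_badChoices_le hK hp hap hfresh) hchain
      (four_mul_mul_choose_le_choose hF)
  · have hempty : ∀ g, badChoices w m K p g d = ∅ := fun g =>
      filter_false_of_mem fun _ _ ⟨a, hap, hfresh, _⟩ => h ⟨a, hap, hfresh⟩
    simp [hempty]

lemma choose_mul_card_states_le {p F : ℕ} (hK : #(K (w p)) = F) (hp : IsFirstOcc w p) :
    F.choose m * #(states w m K p) ≤
      #(states w m K (p + 1)) +
        ∑ d ∈ range p, ∑ g ∈ states w m K p, #(badChoices w m K p g d) := by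
  have hcover : ∀ g, powersetCard m (K (w p)) ⊆
      goodChoices w m K p g ∪ (range p).biUnion (badChoices w m K p g) := by
    intro g s hs
    by_cases hgood : BreaksPatternsEndingAt w p (update g (w p) s)
    · exact mem_union_left _ (mem_filter.2 ⟨hs, hgood⟩)
    · simp only [BreaksPatternsEndingAt, not_forall] at hgood
      obtain ⟨a, d, hap, hfresh, hnb⟩ := hgood
      exact mem_union_right _ (mem_biUnion.2
        ⟨d, mem_range.2 (by omega), mem_filter.2 ⟨hs, a, hap, hfresh, hnb⟩⟩)
  rw [card_states_succ hp, sum_comm, ← sum_add_distrib, mul_comm, ← smul_eq_mul]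
  refine card_nsmul_le_sum _ _ _ fun g _ => ?_
  calc F.choose m = #(powersetCard m (K (w p))) := by rw [card_powersetCard, hK]
    _ ≤ #(goodChoices w m K p g ∪ (range p).biUnion (badChoices w m K p g)) :=
      card_le_card (hcover g)
    _ ≤ _ := (card_union_le _ _).trans (Nat.add_le_add_left card_biUnion_le _)

lemma choose_mul_card_states_le_two_mul {n F : ℕ} (hF : 4 * m ^ 2 ≤ F)
    (hK : ∀ i < n, #(K (w i)) = F) (p : ℕ) (hp : p < n) (hpf : IsFirstOcc w p) :
    F.choose m * #(states w m K p) ≤ 2 * #(states w m K (p + 1)) := by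
  induction p using Nat.strong_induction_on with
  | _ p ih =>
  have hcount := choose_mul_card_states_le (m := m) (hK p hp) hpf
  have hbad := sum_range_le_two_mul_of_two_pow_mul_le (p := p) fun d _ =>
    two_pow_mul_sum_card_badChoices_le hF hK hp (fun q hq => ih q hq (by omega)) d
  have hB := Nat.mul_le_mul_right #(states w m K p) (four_mul_mul_choose_le_choose hF)
  linarith

lemma states_nonempty {n F : ℕ} (hF : 4 * m ^ 2 ≤ F) (hK : ∀ i < n, #(K (w i)) = F) :
    ∀ p ≤ n, (states w m K p).Nonempty
  | 0, _ => by simp [states]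
  | p + 1, hp => by
    have ih := states_nonempty hF hK p (by omega)
    by_cases hpf : IsFirstOcc w p
    · have hgrowth := choose_mul_card_states_le_two_mul hF hK p (by omega) hpf
      have hA : 0 < F.choose m := Nat.choose_pos (by nlinarith)
      have hX := ih.card_pos
      exact card_pos.1 (by nlinarith)
    · rwa [states, if_neg hpf]

theorem exists_filter_breaking_fresh_patterns {n F : ℕ} (hF : 4 * m ^ 2 ≤ F)
    (hK : ∀ i < n, F ≤ #(K (w i))) :
    ∃ M : V → Finset C, (∀ i < n, M (w i) ⊆ K (w i) ∧ #(M (w i)) = m) ∧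
      ∀ a l, 1 ≤ l → a + 2 * l ≤ n → HasFreshSecondHalf w a l → Breaks w M a l := by
  have htrim : ∀ v, ∃ T ⊆ K v, F ≤ #(K v) → #T = F := fun v => by
    by_cases h : F ≤ #(K v)
    · obtain ⟨T, hT, hTcard⟩ := exists_subset_card_eq h
      exact ⟨T, hT, fun _ => hTcard⟩
    · exact ⟨∅, empty_subset _, fun h' => absurd h' h⟩
  choose T hTK hTcard using htrim
  obtain ⟨M, hM⟩ := states_nonempty (K := T) hF (fun i hi => hTcard _ (hK i hi)) n le_rfl
  refine ⟨M, fun i hi => ?_, fun a l hl hal hfresh => breaks_of_mem_states hM hl hal hfresh⟩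
  obtain ⟨hMT, hMcard⟩ := mem_powersetCard.1 ((states_spec hM).1 i hi)
  exact ⟨hMT.trans (hTK _), hMcard⟩

end States

section Laminar

variable {V C : Type*} (w : ℕ → V)

def IsLastOcc (n r : ℕ) : Prop := ∀ s, r < s → s < n → w s ≠ w r

def IsLaminar (n : ℕ) : Prop :=
  ∀ i a j b, i < a → a < j → j < b → b < n → w i = w j → w a = w b → w i = w a

variable {w}

theorem exists_filter_breaking_last_patterns {n F : ℕ} (m : ℕ) (K : V → Finset C)
    (hF : 4 * m ^ 2 ≤ F) (hK : ∀ i < n, F ≤ #(K (w i))) :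
    ∃ M : V → Finset C, (∀ i < n, M (w i) ⊆ K (w i) ∧ #(M (w i)) = m) ∧
      ∀ a l, 1 ≤ l → a + 2 * l ≤ n → (∀ k < l, IsLastOcc w n (a + k)) →
        Breaks w M a l := by
  obtain ⟨M, hMK, hM⟩ := exists_filter_breaking_fresh_patterns (w := fun t => w (n - 1 - t))
    (n := n) (m := m) (K := K) hF fun i hi => hK _ (by omega)
  refine ⟨M, fun i hi => ?_, fun a l hl hal hlast => ?_⟩
  · simpa [show n - 1 - (n - 1 - i) = i by omega] using hMK (n - 1 - i) (by omega)
  obtain ⟨k, hk, hdisj⟩ := hM (n - a - 2 * l) l hl (by omega) fun k hk q hq => by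
    have := hlast (l - 1 - k) (by omega) (n - 1 - q) (by omega) (by omega)
    convert this using 3; omega
  refine ⟨l - 1 - k, by omega, ?_⟩
  convert hdisj.symm using 4 <;> omega

lemma isLastOcc_of_laminar {n i j q r r' : ℕ}
    (hlam : IsLaminar w n)
    (hdist : ∀ r s, i ≤ r → r < s → s ≤ j → w r ≠ w s)
    (hqr' : q < r') (hwq : w q = w r') (hir : i ≤ r) (hrr' : r < r') (hr'j : r' ≤ j) :
    IsLastOcc w n r := by
  intro s hrs hsn hws
  have hqi : q < i := by
    by_contra
    exact hdist q r' (by omega) hqr' hr'j hwq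
  by_cases hsj : s ≤ j
  · exact hdist r s hir hrs hsj hws.symm
  · exact hdist r r' hir hrr' hr'j
      ((hlam q r r' s (by omega) hrr' (by omega) hsn hwq hws.symm).symm.trans hwq)

theorem exists_filter_of_laminar {n m : ℕ}
    (hlam : IsLaminar w n)
    (L : V → Finset C) (hL : ∀ i < n, f6 m ≤ #(L (w i))) :
    ∃ M : V → Finset C, (∀ i < n, M (w i) ⊆ L (w i) ∧ #(M (w i)) = m) ∧
      ∀ i j a l, j < n → (∀ r s, i ≤ r → r < s → s ≤ j → w r ≠ w s) →
        i ≤ a → 1 ≤ l → a + 2 * l ≤ j + 1 → Breaks w M a l := by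
  obtain ⟨M₁, hM₁L, hM₁⟩ :=
    exists_filter_breaking_last_patterns (f5 m) L (four_mul_sq_le_f5 (f5 m)) hL
  obtain ⟨M₂, hM₂M₁, hM₂⟩ := exists_filter_breaking_fresh_patterns (m := m) (K := M₁)
    (four_mul_sq_le_f5 m) fun i hi => (hM₁L i hi).2.ge
  refine ⟨M₂, fun i hi => ⟨(hM₂M₁ i hi).1.trans (hM₁L i hi).1, (hM₂M₁ i hi).2⟩,
    fun i j a l hj hdist hia hl hal => ?_⟩
  by_cases hfresh : HasFreshSecondHalf w a l
  · exact hM₂ a l hl (by omega) hfresh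
  obtain ⟨k, hk, q, hq, hwq⟩ : ∃ k < l, ∃ q < a + l + k, w q = w (a + l + k) := by
    simpa [HasFreshSecondHalf, IsFirstOcc] using hfresh
  obtain ⟨k', hk', hdisj⟩ := hM₁ a l hl (by omega) fun k' hk' =>
    isLastOcc_of_laminar hlam hdist hq hwq (by omega) (by omega) (by omega)
  exact ⟨k', hk', hdisj.mono (hM₂M₁ _ (by omega)).1 (hM₂M₁ _ (by omega)).1⟩

end Laminar

end WalkFiltering

/-- Walk Filtering Lemma (laminar form): let `W = (w 0, …, w (n-1))` be a walk on a
vertex set `V` whose repeated occurrences have laminar structure (no positions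
`i < a < j < b` with `w i = w j`, `w a = w b` and `w i ≠ w a`), and let `L` be a proper
list assignment of `W` (consecutive vertices of `W` have disjoint lists) with at least
`f₆(m)` colors on each vertex occurring in `W`. Then there is `M` with `M v ⊆ L v` and
`|M v| ≥ m` for every vertex `v` occurring in `W`, such that for every simple `W`-block
`(w i, …, w j)` and every coloring `c` with `c v ∈ M v` for all vertices of `W`, the
sequence `(c (w i), …, c (w j))` is non-repetitive. -/
theorem walk_filtering_lemma {V C : Type*} (m n : ℕ) (w : Fin n → V)
    (laminar : ¬ ∃ i a j b : Fin n, i < a ∧ a < j ∧ j < b ∧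
      w i = w j ∧ w a = w b ∧ w i ≠ w a)
    (L : V → Finset C)
    (hcard : ∀ i : Fin n, f6 m ≤ (L (w i)).card) :
    ∃ M : V → Finset C,
      (∀ i : Fin n, M (w i) ⊆ L (w i) ∧ m ≤ (M (w i)).card) ∧
      (∀ (i j : ℕ) (hij : i ≤ j) (hj : j < n),
        (∀ a b : ℕ, (ha : i ≤ a) → (hab : a < b) → (hb : b ≤ j) →
          w ⟨a, by omega⟩ ≠ w ⟨b, by omega⟩) →
        ∀ c : V → C, (∀ t : Fin n, c (w t) ∈ M (w t)) →
          ∀ (a l : ℕ), (hia : i ≤ a) → (hl : 1 ≤ l) → (hal : a + 2 * l ≤ j + 1) →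
            ¬ ∀ k : ℕ, (hk : k < l) →
              c (w ⟨a + k, by omega⟩) = c (w ⟨a + l + k, by omega⟩)) := by
  rcases Nat.eq_zero_or_pos n with rfl | hn
  · exact ⟨fun _ => ∅, fun i => i.elim0, fun _ _ _ hj => absurd hj (Nat.not_lt_zero _)⟩
  obtain ⟨W, hW⟩ : ∃ W : ℕ → V, ∀ p (hp : p < n), W p = w ⟨p, hp⟩ :=
    ⟨fun p => w ⟨p % n, Nat.mod_lt p hn⟩,
      fun p hp => congrArg w (Fin.ext (Nat.mod_eq_of_lt hp))⟩
  obtain ⟨M, hML, hM⟩ := WalkFiltering.exists_filter_of_laminar (w := W) (n := n)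
    (fun i a j b hia haj hjb hbn hij hab => by
      by_contra hne
      refine laminar ⟨⟨i, by omega⟩, ⟨a, by omega⟩, ⟨j, by omega⟩, ⟨b, hbn⟩,
        hia, haj, hjb, ?_⟩
      simp only [← hW]
      exact ⟨hij, hab, hne⟩)
    L fun i hi => by simpa [hW i hi] using hcard ⟨i, hi⟩
  refine ⟨M, fun i => by simpa [hW i i.2] using (hML i i.2).imp_right ge_of_eq,
    fun i j _ hj hdist c hc a l hia hl hal hrep => ?_⟩
  obtain ⟨k, hk, hdisj⟩ := hM i j a l hj (fun r s hr hrs hs => by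
    simpa [hW r (by omega), hW s (by omega)] using hdist r s hr hrs hs) hia hl hal
  have h1 := hc ⟨a + k, by omega⟩
  rw [hrep k hk] at h1
  rw [hW _ (by omega), hW _ (by omega)] at hdisj
  exact Finset.disjoint_left.1 hdisj h1 (hc ⟨a + l + k, by omega⟩)
end

section
/- Let W = (w_1,…,w_n) be a walk on a vertex set V whose repeated occurrences have laminar structure: there are no positions i < a < j < b with w_i = w_j, w_a = w_b, and w_i ≠ w_a. Call an interval [l,r] ⊆ {1,…,n} a maximal simple W-block if the vertices w_l,…,w_r are pairwise distinct, and moreover (l = 1 or w_{l−1},…,w_r are not pairwise distinct) and (r = n or w_l,…,w_{r+1} are not pairwise distinct). Then: (1) for any two maximal simple W-blocks [l,r] and [l′,r′] with l < l′ one has r < r′; and (2) for any three maximal simple W-blocks [l₁,r₁], [l₂,r₂], [l₃,r₃] with l₁ < l₂ < l₃ one has r₁ < l₃ (so [l₁,r₁] and [l₃,r₃] are disjoint intervals). Consequently, the maximal simple W-blocks, listed in increasing order of left endpoint, can be 2-colored alternately so that any two blocks of the same color are non-overlapping. -/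
/-- The vertices `w l, …, w r` of the walk `w` are pairwise distinct. -/
def PairwiseDistinctOn {V : Type*} {n : ℕ} (w : Fin n → V) (l r : ℕ) : Prop :=
  ∀ a b : Fin n, l ≤ a.val → a < b → b.val ≤ r → w a ≠ w b

/-- `[l, r]` is a maximal simple `W`-block of the walk `w` (positions are 0-indexed):
the vertices `w l, …, w r` are pairwise distinct, and the block cannot be extended by
one position in either direction while remaining simple. -/
def MaximalSimpleBlock {V : Type*} {n : ℕ} (w : Fin n → V) (l r : ℕ) : Prop :=
  l ≤ r ∧ r < n ∧ PairwiseDistinctOn w l r ∧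
    (l = 0 ∨ ¬ PairwiseDistinctOn w (l - 1) r) ∧
    (r = n - 1 ∨ ¬ PairwiseDistinctOn w l (r + 1))

lemma pd_mono {V : Type*} {n : ℕ} {w : Fin n → V} {l r l' r' : ℕ}
    (h : PairwiseDistinctOn w l r) (hl : l ≤ l') (hr : r' ≤ r) :
    PairwiseDistinctOn w l' r' :=
  fun a b ha hab hb => h a b (hl.trans ha) hab (hb.trans hr)

lemma msb_part1 {V : Type*} {n : ℕ} {w : Fin n → V} {l r l' r' : ℕ}
    (h1 : MaximalSimpleBlock w l r) (h2 : MaximalSimpleBlock w l' r')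
    (hll : l < l') : r < r' := by
  by_contra hrr
  push_neg at hrr
  obtain ⟨_, _, hpd1, _, _⟩ := h1
  obtain ⟨_, _, _, hleft, _⟩ := h2
  rcases hleft with h0 | hnpd
  · omega
  · exact hnpd (pd_mono hpd1 (by omega) hrr)

lemma msb_part2 {V : Type*} {n : ℕ} {w : Fin n → V}
    (laminar : ¬ ∃ i a j b : Fin n, i < a ∧ a < j ∧ j < b ∧
      w i = w j ∧ w a = w b ∧ w i ≠ w a)
    {l₁ r₁ l₂ r₂ l₃ r₃ : ℕ}
    (h1 : MaximalSimpleBlock w l₁ r₁) (h2 : MaximalSimpleBlock w l₂ r₂)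
    (h3 : MaximalSimpleBlock w l₃ r₃) (h12 : l₁ < l₂) (h23 : l₂ < l₃) :
    r₁ < l₃ := by
  by_contra hcon
  push_neg at hcon   -- l₃ ≤ r₁
  have hr12 : r₁ < r₂ := msb_part1 h1 h2 h12
  have hr23 : r₂ < r₃ := msb_part1 h2 h3 h23
  obtain ⟨hl1, hr1n, hpd1, _, _⟩ := h1
  obtain ⟨hl2, hr2n, hpd2, hleft2, hright2⟩ := h2
  obtain ⟨hl3, hr3n, hpd3, _, _⟩ := h3
  -- left non-extendability of block 2
  have hnpdL : ¬ PairwiseDistinctOn w (l₂ - 1) r₂ := by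
    rcases hleft2 with h0 | h
    · omega
    · exact h
  rw [PairwiseDistinctOn] at hnpdL
  push_neg at hnpdL
  obtain ⟨a, b, ha, hab, hb, hwab⟩ := hnpdL
  -- a is strictly below l₂
  have haval : a.val < l₂ := by
    by_contra h
    push_neg at h
    exact hpd2 a b h hab hb hwab
  -- b is beyond r₁
  have hbval : r₁ < b.val := by
    by_contra h
    push_neg at h
    exact hpd1 a b (by omega) hab h hwab
  -- right non-extendability of block 2
  have hnpdR : ¬ PairwiseDistinctOn w l₂ (r₂ + 1) := by
    rcases hright2 with h0 | h
    · omega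
    · exact h
  rw [PairwiseDistinctOn] at hnpdR
  push_neg at hnpdR
  obtain ⟨c, d, hc, hcd, hd, hwcd⟩ := hnpdR
  -- d is exactly r₂ + 1
  have hdval : r₂ + 1 ≤ d.val := by
    by_contra h
    push_neg at h
    exact hpd2 c d hc hcd (by omega) hwcd
  -- c is strictly below l₃
  have hcval : c.val < l₃ := by
    by_contra h
    push_neg at h
    exact hpd3 c d h hcd (by omega) hwcd
  -- interleaving contradicts laminarity
  apply laminar
  refine ⟨a, c, b, d, ?_, ?_, ?_, hwab, hwcd, ?_⟩
  · exact Fin.lt_def.mpr (by omega)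
  · exact Fin.lt_def.mpr (by omega)
  · exact Fin.lt_def.mpr (by omega)
  · exact hpd1 a c (by omega) (Fin.lt_def.mpr (by omega)) (by omega)

/-- For a walk `w` whose repeated occurrences have laminar structure:
(1) maximal simple `W`-blocks with `l < l'` satisfy `r < r'`;
(2) for three maximal simple `W`-blocks with `l₁ < l₂ < l₃` one has `r₁ < l₃`;
consequently, the maximal simple `W`-blocks can be 2-colored so that any two distinct
blocks of the same color are non-overlapping intervals. -/
theorem maximal_simple_blocks_structure {V : Type*} (n : ℕ) (w : Fin n → V)
    (laminar : ¬ ∃ i a j b : Fin n, i < a ∧ a < j ∧ j < b ∧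
      w i = w j ∧ w a = w b ∧ w i ≠ w a) :
    (∀ l r l' r' : ℕ, MaximalSimpleBlock w l r → MaximalSimpleBlock w l' r' →
      l < l' → r < r') ∧
    (∀ l₁ r₁ l₂ r₂ l₃ r₃ : ℕ, MaximalSimpleBlock w l₁ r₁ →
      MaximalSimpleBlock w l₂ r₂ → MaximalSimpleBlock w l₃ r₃ →
      l₁ < l₂ → l₂ < l₃ → r₁ < l₃) ∧
    (∃ col : ℕ → ℕ → Bool, ∀ l r l' r' : ℕ,
      MaximalSimpleBlock w l r → MaximalSimpleBlock w l' r' → l ≠ l' →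
      col l r = col l' r' → (r < l' ∨ r' < l)) := by
  classical
  refine ⟨fun l r l' r' h1 h2 h => msb_part1 h1 h2 h,
    fun l₁ r₁ l₂ r₂ l₃ r₃ h1 h2 h3 h12 h23 => msb_part2 laminar h1 h2 h3 h12 h23, ?_⟩
  set P : ℕ → Prop := fun x => ∃ r'', MaximalSimpleBlock w x r'' with hP
  set N : ℕ → ℕ := fun l => ((Finset.range l).filter P).card with hN
  refine ⟨fun l _ => decide (Odd (N l)), ?_⟩
  -- key lemma: same color and l < l' forces r < l'
  have key : ∀ l r l' r' : ℕ, MaximalSimpleBlock w l r → MaximalSimpleBlock w l' r' →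
      l < l' → decide (Odd (N l)) = decide (Odd (N l')) → r < l' := by
    intro l r l' r' h1 h2 hll hcol
    have hPl : P l := ⟨r, h1⟩
    -- there must be an intermediate block start
    by_cases hmid : ∃ m, l < m ∧ m < l' ∧ P m
    · obtain ⟨m, hlm, hml', hPm⟩ := hmid
      obtain ⟨rm, hm⟩ := hPm
      exact msb_part2 laminar h1 hm h2 hlm hml'
    · exfalso
      push_neg at hmid
      have hset : (Finset.range l').filter P = insert l ((Finset.range l).filter P) := by
        ext x
        simp only [Finset.mem_insert, Finset.mem_filter, Finset.mem_range]
        constructor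
        · rintro ⟨hx, hPx⟩
          rcases lt_trichotomy x l with h | h | h
          · exact Or.inr ⟨h, hPx⟩
          · exact Or.inl h
          · exact absurd hPx (by have := hmid x h; tauto)
        · rintro (rfl | ⟨hx, hPx⟩)
          · exact ⟨hll, hPl⟩
          · exact ⟨by omega, hPx⟩
      have hnotmem : l ∉ (Finset.range l).filter P := by
        simp [Finset.mem_filter]
      have hcard : N l' = N l + 1 := by
        simp only [hN, hset, Finset.card_insert_of_notMem hnotmem]
      rw [hcard] at hcol
      rw [decide_eq_decide] at hcol
      simp [Nat.odd_add_one] at hcol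
      rcases Nat.even_or_odd (N l) with he | ho
      · exact (Nat.not_odd_iff_even.mpr he) (hcol.mpr he)
      · exact (Nat.not_even_iff_odd.mpr ho) (hcol.mp ho)
  intro l r l' r' h1 h2 hne hcol
  rcases lt_or_gt_of_ne hne with h | h
  · exact Or.inl (key l r l' r' h1 h2 h hcol)
  · exact Or.inr (key l' r' l r h2 h1 h hcol.symm)
end
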